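/- arXiv:gr-qc/0001018 — 4 statements merged into one kernel-verified Lean document; each statement's English description precedes it below -/
import Mathlib

section
/- For an axisymmetric harmonic function ν on a domain in ℝ³, the 1-form ω = r(ν_r² − ν_z²)dr + 2r·ν_r·ν_z dz is closed, i.e., ∂_z[r(ν_r² − ν_z²)] = ∂_r[2r·ν_r·ν_z]. -/
lemma slice1 {E : Type*} [NormedAddCommGroup E] [NormedSpace ℝ E]
    {f : ℝ × ℝ → E} {r z : ℝ} (h : DifferentiableAt ℝ f (r, z)) :
    HasDerivAt (fun r' => f (r', z)) (fderiv ℝ f (r, z) (1, 0)) r := by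
  have hg : HasDerivAt (fun r' : ℝ => (r', z)) ((1 : ℝ), (0 : ℝ)) r :=
    (hasDerivAt_id r).prodMk (hasDerivAt_const r z)
  exact h.hasFDerivAt.comp_hasDerivAt r hg

lemma slice2 {E : Type*} [NormedAddCommGroup E] [NormedSpace ℝ E]
    {f : ℝ × ℝ → E} {r z : ℝ} (h : DifferentiableAt ℝ f (r, z)) :
    HasDerivAt (fun z' => f (r, z')) (fderiv ℝ f (r, z) (0, 1)) z := by
  have hg : HasDerivAt (fun z' : ℝ => (r, z')) ((0 : ℝ), (1 : ℝ)) z :=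
    (hasDerivAt_const z r).prodMk (hasDerivAt_id z)
  exact h.hasFDerivAt.comp_hasDerivAt z hg



/-- For an axisymmetric harmonic function `ν` (i.e. `ν_rr + (1/r)ν_r + ν_zz = 0`)
on an open set `Ω ⊆ {r > 0}`, the 1-form
`ω = r(ν_r² − ν_z²)dr + 2r·ν_r·ν_z dz` is closed:
`∂_z[r(ν_r² − ν_z²)] = ∂_r[2r·ν_r·ν_z]`. -/
theorem weyl_integrability_form_closed {Ω : Set (ℝ × ℝ)} (hΩ : IsOpen Ω)
    (hΩr : ∀ p ∈ Ω, 0 < p.1)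
    (ν : ℝ → ℝ → ℝ) (hν : ContDiff ℝ (⊤ : ℕ∞) (fun p : ℝ × ℝ => ν p.1 p.2))
    (hpde : ∀ p ∈ Ω,
      deriv (fun r' => deriv (fun r'' => ν r'' p.2) r') p.1
        + (1 / p.1) * deriv (fun r' => ν r' p.2) p.1
        + deriv (fun z' => deriv (fun z'' => ν p.1 z'') z') p.2 = 0)
    {r z : ℝ} (hmem : (r, z) ∈ Ω) :
    deriv (fun z' =>
        r * ((deriv (fun r' => ν r' z') r) ^ 2 - (deriv (fun z'' => ν r z'') z') ^ 2)) z
      = deriv (fun r' =>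
        2 * r' * (deriv (fun r'' => ν r'' z) r') * (deriv (fun z' => ν r' z') z)) r := by
  have hr : 0 < r := hΩr (r, z) hmem
  set f : ℝ × ℝ → ℝ := fun p => ν p.1 p.2 with hfdef
  have hf1 : Differentiable ℝ f := hν.differentiable (by simp)
  have hfd : ContDiff ℝ (⊤ : ℕ∞) (fderiv ℝ f) := hν.fderiv_right (by simp)
  set F1 : ℝ × ℝ → ℝ := fun p => fderiv ℝ f p (1, 0) with hF1def
  set F2 : ℝ × ℝ → ℝ := fun p => fderiv ℝ f p (0, 1) with hF2def
  have hF1 : Differentiable ℝ F1 := (hfd.clm_apply contDiff_const).differentiable (by simp)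
  have hF2 : Differentiable ℝ F2 := (hfd.clm_apply contDiff_const).differentiable (by simp)
  set D2 := fderiv ℝ (fderiv ℝ f) (r, z) with hD2def
  -- fderiv of F1, F2 in terms of D2
  have hAppF1 : ∀ p : ℝ × ℝ, HasFDerivAt F1
      ((ContinuousLinearMap.apply ℝ ℝ ((1:ℝ), (0:ℝ))).comp (fderiv ℝ (fderiv ℝ f) p)) p :=
    fun p => (ContinuousLinearMap.apply ℝ ℝ ((1:ℝ), (0:ℝ))).hasFDerivAt.comp p
      ((hfd.differentiable (by simp) p).hasFDerivAt)
  have hAppF2 : ∀ p : ℝ × ℝ, HasFDerivAt F2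
      ((ContinuousLinearMap.apply ℝ ℝ ((0:ℝ), (1:ℝ))).comp (fderiv ℝ (fderiv ℝ f) p)) p :=
    fun p => (ContinuousLinearMap.apply ℝ ℝ ((0:ℝ), (1:ℝ))).hasFDerivAt.comp p
      ((hfd.differentiable (by simp) p).hasFDerivAt)
  -- partial derivatives of ν equal F1, F2
  have hd1 : ∀ r' z' : ℝ, deriv (fun r'' => ν r'' z') r' = F1 (r', z') := by
    intro r' z'
    exact (slice1 (hf1 (r', z'))).deriv
  have hd2 : ∀ r' z' : ℝ, deriv (fun z'' => ν r' z'') z' = F2 (r', z') := by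
    intro r' z'
    exact (slice2 (hf1 (r', z'))).deriv
  -- second partials
  have hF1z : HasDerivAt (fun z' => F1 (r, z')) (D2 (0, 1) (1, 0)) z := by
    have := slice2 (hF1 (r, z))
    rwa [(hAppF1 (r, z)).fderiv] at this
  have hF2z : HasDerivAt (fun z' => F2 (r, z')) (D2 (0, 1) (0, 1)) z := by
    have := slice2 (hF2 (r, z))
    rwa [(hAppF2 (r, z)).fderiv] at this
  have hF1r : HasDerivAt (fun r' => F1 (r', z)) (D2 (1, 0) (1, 0)) r := by
    have := slice1 (hF1 (r, z))
    rwa [(hAppF1 (r, z)).fderiv] at this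
  have hF2r : HasDerivAt (fun r' => F2 (r', z)) (D2 (1, 0) (0, 1)) r := by
    have := slice1 (hF2 (r, z))
    rwa [(hAppF2 (r, z)).fderiv] at this
  -- symmetry of second derivative
  have hsymm : D2 (0, 1) (1, 0) = D2 (1, 0) (0, 1) := by
    have h2 : IsSymmSndFDerivAt ℝ f (r, z) :=
      (hν.contDiffAt).isSymmSndFDerivAt (by rw [minSmoothness_of_isRCLikeNormedField]; exact WithTop.coe_le_coe.mpr le_top)
    exact h2 _ _
  set a := F1 (r, z) with ha
  set b := F2 (r, z) with hb
  set A11 := D2 (1, 0) (1, 0) with hA11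
  set A12 := D2 (1, 0) (0, 1) with hA12
  set B22 := D2 (0, 1) (0, 1) with hB22
  -- PDE at (r, z)
  have hpde' : A11 + (1 / r) * a + B22 = 0 := by
    have := hpde (r, z) hmem
    simp only at this
    rw [hd1 r z] at this
    have e1 : deriv (fun r' => deriv (fun r'' => ν r'' z) r') r = A11 := by
      have : (fun r' => deriv (fun r'' => ν r'' z) r') = fun r' => F1 (r', z) := by
        funext r'; exact hd1 r' z
      rw [this, hF1r.deriv]
    have e2 : deriv (fun z' => deriv (fun z'' => ν r z'') z') z = B22 := by
      have : (fun z' => deriv (fun z'' => ν r z'') z') = fun z' => F2 (r, z') := by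
        funext z'; exact hd2 r z'
      rw [this, hF2z.deriv]
    rw [e1, e2] at this
    exact this
  -- LHS
  have hL : deriv (fun z' =>
      r * ((deriv (fun r' => ν r' z') r) ^ 2 - (deriv (fun z'' => ν r z'') z') ^ 2)) z
      = r * (2 * a * A12 - 2 * b * B22) := by
    have hfun : (fun z' =>
        r * ((deriv (fun r' => ν r' z') r) ^ 2 - (deriv (fun z'' => ν r z'') z') ^ 2))
        = fun z' => r * ((F1 (r, z')) ^ 2 - (F2 (r, z')) ^ 2) := by
      funext z'; rw [hd1 r z', hd2 r z']
    rw [hfun]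
    have h : HasDerivAt (fun z' => r * ((F1 (r, z')) ^ 2 - (F2 (r, z')) ^ 2))
        (r * (2 * a * A12 - 2 * b * B22)) z := by
      have := (((hF1z.pow 2).sub (hF2z.pow 2)).const_mul r)
      refine this.congr_deriv ?_
      rw [← hsymm]
      push_cast
      ring
    exact h.deriv
  -- RHS
  have hR : deriv (fun r' =>
      2 * r' * (deriv (fun r'' => ν r'' z) r') * (deriv (fun z' => ν r' z') z)) r
      = 2 * a * b + 2 * r * A11 * b + 2 * r * a * A12 := by
    have hfun : (fun r' =>
        2 * r' * (deriv (fun r'' => ν r'' z) r') * (deriv (fun z' => ν r' z') z))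
        = fun r' => 2 * r' * F1 (r', z) * F2 (r', z) := by
      funext r'; rw [hd1 r' z, hd2 r' z]
    rw [hfun]
    have h : HasDerivAt (fun r' => 2 * r' * F1 (r', z) * F2 (r', z))
        (2 * a * b + 2 * r * A11 * b + 2 * r * a * A12) r := by
      have := (((hasDerivAt_id r).const_mul 2).mul hF1r).mul hF2r
      refine this.congr_deriv ?_
      simp only [id_eq, Pi.mul_apply]
      ring
    exact h.deriv
  rw [hL, hR]
  have hB : B22 = -A11 - a / r := by
    field_simp at hpde' ⊢
    linarith
  rw [hB]
  field_simp
  ring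
end

section
/- A positive Radon measure dμ supported on the z-axis A in ℝ³ generates a Newtonian potential ν(x) = −∫ |x−ξ|^{−1} dμ(ξ) that is finite at some (equivalently, every) point off the axis if and only if ∫₁^∞ m_x(ρ)/ρ² dρ < ∞, where m_x(ρ) = μ(B_x(ρ)) for a fixed x on the axis. -/
open MeasureTheory Set Metric
open scoped ENNReal

/-! Off the axis, the potential is comparable μ-a.e. to the truncated kernel
`(max 1 |ξ - x|)⁻¹`: one direction needs only that `μ` does not charge `y`, the other uses the
point `y = (1, 0, 0)`, which lies at distance at least `1` from the axis. Since
`(max 1 r)⁻¹ = ∫_{max 1 r}^∞ ρ⁻² dρ`, Tonelli turns the `μ`-integral of the truncated kernel into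
`∫₁^∞ m_x(ρ) ρ⁻² dρ`. -/

theorem lintegral_Ioi_ofReal_inv_sq {a : ℝ} (ha : 0 < a) :
    ∫⁻ ρ in Ioi a, ENNReal.ofReal (ρ ^ 2)⁻¹ = ENNReal.ofReal a⁻¹ := by
  have h_rpow : ∀ ρ ∈ Ioi a, (ρ ^ 2)⁻¹ = ρ ^ (-2 : ℝ) := fun ρ hρ => by
    simp only [Real.rpow_neg (ha.trans hρ).le, Real.rpow_two]
  have h_int : IntegrableOn (fun ρ : ℝ => ρ ^ (-2 : ℝ)) (Ioi a) :=
    integrableOn_Ioi_rpow_of_lt (by norm_num) ha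
  rw [setLIntegral_congr_fun measurableSet_Ioi fun ρ hρ => by rw [h_rpow ρ hρ],
    ← ofReal_integral_eq_lintegral_ofReal h_int
      ((ae_restrict_iff' measurableSet_Ioi).2 (.of_forall fun ρ hρ =>
        Real.rpow_nonneg (ha.trans hρ).le _)),
    integral_Ioi_rpow_of_lt (by norm_num) ha]
  norm_num [Real.rpow_neg_one]

theorem lintegral_lt_top_of_ae_le_const_mul {α : Type*} [MeasurableSpace α] {μ : Measure α}
    {f g : α → ℝ≥0∞} {c : ℝ≥0∞} (hc : c ≠ ⊤) (hfg : ∀ᵐ ξ ∂μ, f ξ ≤ c * g ξ)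
    (hg : ∫⁻ ξ, g ξ ∂μ < ⊤) : ∫⁻ ξ, f ξ ∂μ < ⊤ :=
  calc ∫⁻ ξ, f ξ ∂μ ≤ ∫⁻ ξ, c * g ξ ∂μ := lintegral_mono_ae hfg
    _ = c * ∫⁻ ξ, g ξ ∂μ := lintegral_const_mul' _ _ hc
    _ < ⊤ := ENNReal.mul_lt_top hc.lt_top hg

theorem integrableOn_toReal_div_sq_iff {ν : Measure ℝ} {s : Set ℝ} {f : ℝ → ℝ≥0∞}
    (hf : AEMeasurable f (ν.restrict s)) (hf_fin : ∀ ρ, f ρ ≠ ⊤) :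
    IntegrableOn (fun ρ => (f ρ).toReal / ρ ^ 2) s ν ↔
      ∫⁻ ρ in s, f ρ * ENNReal.ofReal (ρ ^ 2)⁻¹ ∂ν < ⊤ := by
  have h_toReal : (fun ρ => (f ρ).toReal / ρ ^ 2) =
      fun ρ => (f ρ * ENNReal.ofReal (ρ ^ 2)⁻¹).toReal := by
    ext ρ
    rw [ENNReal.toReal_mul, ENNReal.toReal_ofReal (by positivity), div_eq_mul_inv]
  rw [IntegrableOn, h_toReal, integrable_toReal_iff (by fun_prop)
    (.of_forall fun ρ => ENNReal.mul_ne_top (hf_fin ρ) ENNReal.ofReal_ne_top), lt_top_iff_ne_top]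

section MetricSpace

variable {α : Type*} [PseudoMetricSpace α]

theorem inv_max_one_dist_le_mul_inv_dist {x y ξ : α} (hξ : 0 < dist y ξ) :
    (max 1 (dist ξ x))⁻¹ ≤ (dist y x + 1) * (dist y ξ)⁻¹ := by
  have hM : 0 < max 1 (dist ξ x) := lt_max_of_lt_left one_pos
  have h_tri : dist y ξ ≤ (dist y x + 1) * max 1 (dist ξ x) := by
    have := dist_triangle y x ξ
    nlinarith [le_max_left 1 (dist ξ x), le_max_right 1 (dist ξ x), dist_comm x ξ,
      dist_nonneg (x := y) (y := x)]
  calc (max 1 (dist ξ x))⁻¹ = (dist y x + 1) * ((dist y x + 1) * max 1 (dist ξ x))⁻¹ := by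
        field_simp
    _ ≤ (dist y x + 1) * (dist y ξ)⁻¹ := by gcongr

theorem inv_dist_le_mul_inv_max_one_dist {x y ξ : α} (hξ : 1 ≤ dist y ξ) :
    (dist y ξ)⁻¹ ≤ (dist y x + 1) * (max 1 (dist ξ x))⁻¹ := by
  have hM : 0 < max 1 (dist ξ x) := lt_max_of_lt_left one_pos
  have h_tri : max 1 (dist ξ x) ≤ (dist y x + 1) * dist y ξ := by
    have := dist_triangle ξ y x
    refine max_le ?_ ?_ <;> nlinarith [dist_comm ξ y, dist_nonneg (x := y) (y := x)]
  calc (dist y ξ)⁻¹ = (dist y x + 1) * ((dist y x + 1) * dist y ξ)⁻¹ := by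
        field_simp
    _ ≤ (dist y x + 1) * (max 1 (dist ξ x))⁻¹ := by gcongr

variable [MeasurableSpace α]

theorem lintegral_inv_max_one_dist_lt_top_of_lintegral_inv_dist {μ : Measure α} (x : α) {y : α}
    (hy : ∀ᵐ ξ ∂μ, 0 < dist y ξ) (h : ∫⁻ ξ, ENNReal.ofReal (dist y ξ)⁻¹ ∂μ < ⊤) :
    ∫⁻ ξ, ENNReal.ofReal (max 1 (dist ξ x))⁻¹ ∂μ < ⊤ :=
  lintegral_lt_top_of_ae_le_const_mul ENNReal.ofReal_ne_top (hy.mono fun _ hξ => by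
    exact (ENNReal.ofReal_le_ofReal (inv_max_one_dist_le_mul_inv_dist hξ)).trans_eq
      (ENNReal.ofReal_mul (by positivity))) h

theorem lintegral_inv_dist_lt_top_of_lintegral_inv_max_one_dist {μ : Measure α} {x y : α}
    (hy : ∀ᵐ ξ ∂μ, 1 ≤ dist y ξ) (h : ∫⁻ ξ, ENNReal.ofReal (max 1 (dist ξ x))⁻¹ ∂μ < ⊤) :
    ∫⁻ ξ, ENNReal.ofReal (dist y ξ)⁻¹ ∂μ < ⊤ :=
  lintegral_lt_top_of_ae_le_const_mul ENNReal.ofReal_ne_top (hy.mono fun _ hξ => by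
    exact (ENNReal.ofReal_le_ofReal (inv_dist_le_mul_inv_max_one_dist hξ)).trans_eq
      (ENNReal.ofReal_mul (by positivity))) h

theorem lintegral_Ioi_one_measure_ball_mul_inv_sq [OpensMeasurableSpace α]
    (μ : Measure α) [SFinite μ] (x : α) :
    ∫⁻ ρ in Ioi 1, μ (ball x ρ) * ENNReal.ofReal (ρ ^ 2)⁻¹ =
      ∫⁻ ξ, ENNReal.ofReal (max 1 (dist ξ x))⁻¹ ∂μ := by
  set F : ℝ → α → ℝ≥0∞ := fun ρ ξ =>
    (Ioi (dist ξ x)).indicator (fun ρ => ENNReal.ofReal (ρ ^ 2)⁻¹) ρ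
  have hF : Measurable (Function.uncurry F) :=
    (ENNReal.measurable_ofReal.comp (measurable_fst.pow_const 2).inv).indicator
      (measurableSet_lt ((continuous_id.dist continuous_const).measurable.comp measurable_snd)
        measurable_fst)
  calc ∫⁻ ρ in Ioi 1, μ (ball x ρ) * ENNReal.ofReal (ρ ^ 2)⁻¹
      = ∫⁻ ρ in Ioi 1, ∫⁻ ξ, F ρ ξ ∂μ := by
        refine lintegral_congr fun ρ => ?_
        rw [mul_comm, ← lintegral_indicator_const measurableSet_ball]
        rfl
    _ = ∫⁻ ξ, (∫⁻ ρ in Ioi 1, F ρ ξ) ∂μ := lintegral_lintegral_swap hF.aemeasurable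
    _ = ∫⁻ ξ, ENNReal.ofReal (max 1 (dist ξ x))⁻¹ ∂μ := by
        refine lintegral_congr fun ξ => ?_
        rw [lintegral_indicator measurableSet_Ioi, Measure.restrict_restrict measurableSet_Ioi,
          Ioi_inter_Ioi, max_comm, lintegral_Ioi_ofReal_inv_sq (lt_max_of_lt_left one_pos)]

end MetricSpace

theorem EuclideanSpace.one_le_dist_single_of_apply_eq_zero {ι : Type*} [Fintype ι]
    [DecidableEq ι] {i : ι} {ξ : EuclideanSpace ℝ ι} (hξ : ξ i = 0) :
    1 ≤ dist (EuclideanSpace.single i 1) ξ := by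
  simpa [hξ] using PiLp.dist_apply_le (EuclideanSpace.single i (1 : ℝ)) ξ i

theorem newtonian_potential_finite_iff_general
    (μ : Measure (EuclideanSpace ℝ (Fin 3))) [IsFiniteMeasureOnCompacts μ]
    (A : Set (EuclideanSpace ℝ (Fin 3)))
    (hA : A = {p | p 0 = 0 ∧ p 1 = 0})
    (hsupp : μ Aᶜ = 0)
    (x : EuclideanSpace ℝ (Fin 3))
    (m : ℝ → ℝ) (hm : ∀ ρ, m ρ = (μ (Metric.ball x ρ)).toReal) :
    (∃ y ∉ A, ∫⁻ ξ, ENNReal.ofReal ‖y - ξ‖⁻¹ ∂μ < ⊤) ↔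
      IntegrableOn (fun ρ => m ρ / ρ ^ 2) (Ici (1 : ℝ)) := by
  have hA_ae : ∀ᵐ ξ ∂μ, ξ ∈ A := by simpa using measure_eq_zero_iff_ae_notMem.1 hsupp
  obtain rfl : m = fun ρ => (μ (ball x ρ)).toReal := funext hm
  have h_mono : Monotone fun ρ => μ (ball x ρ) := fun _ _ hab =>
    measure_mono (ball_subset_ball hab)
  simp only [← dist_eq_norm]
  rw [integrableOn_Ici_iff_integrableOn_Ioi,
    integrableOn_toReal_div_sq_iff h_mono.measurable.aemeasurable fun _ => measure_ball_lt_top.ne,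
    lintegral_Ioi_one_measure_ball_mul_inv_sq]
  constructor
  · rintro ⟨y, hyA, hy⟩
    exact lintegral_inv_max_one_dist_lt_top_of_lintegral_inv_dist x
      (hA_ae.mono fun ξ hξ => dist_pos.2 (ne_of_mem_of_not_mem hξ hyA).symm) hy
  · intro h
    refine ⟨EuclideanSpace.single 0 1, by simp [hA], ?_⟩
    refine lintegral_inv_dist_lt_top_of_lintegral_inv_max_one_dist (hA_ae.mono fun ξ hξ => ?_) h
    rw [hA] at hξ
    exact EuclideanSpace.one_le_dist_single_of_apply_eq_zero hξ.1

/-- A positive Radon measure `μ` on `ℝ³` supported on the z-axis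
`A = {x₁ = x₂ = 0}` generates a Newtonian potential
`ν(y) = −∫ |y−ξ|⁻¹ dμ(ξ)` that is finite at some point off the axis if and
only if `∫₁^∞ m_x(ρ)/ρ² dρ < ∞`, where `m_x(ρ) = μ(B_x(ρ))` for a fixed
point `x` on the axis. -/
theorem newtonian_potential_finite_iff
    (μ : Measure (EuclideanSpace ℝ (Fin 3))) [IsFiniteMeasureOnCompacts μ]
    (A : Set (EuclideanSpace ℝ (Fin 3)))
    (hA : A = {p | p 0 = 0 ∧ p 1 = 0})
    (hsupp : μ Aᶜ = 0)
    (x : EuclideanSpace ℝ (Fin 3)) (hx : x ∈ A)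
    (m : ℝ → ℝ) (hm : ∀ ρ, m ρ = (μ (Metric.ball x ρ)).toReal) :
    (∃ y ∉ A, ∫⁻ ξ, ENNReal.ofReal ‖y - ξ‖⁻¹ ∂μ < ⊤) ↔
      IntegrableOn (fun ρ => m ρ / ρ ^ 2) (Ici (1 : ℝ)) :=
  newtonian_potential_finite_iff_general μ A hA hsupp x m hm
end

section
/- Let λ(s) be a C¹ solution on [s₀, ∞) of the Riccati inequality |λ' + λ²| ≤ h(s) with ∫ s·h(s) ds < ∞ and s·λ(s) → 1 as s → ∞. Then ∫_{s₀}^∞ |λ(s) − 1/s| ds < ∞. -/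
open MeasureTheory Set Filter

/-!
Put `u(s) = s λ(s) - 1`. Then `u' = -u (1 + u) / s + s (λ' + λ²)`, so wherever `|u| ≤ 1/2`
(which holds for `s ≥ S` because `s λ(s) → 1`) the right derivative of `|u|` is at most
`-|u| / (2s) + s h(s)`. Integrating over `[S, T]` bounds `∫_S^T |u(s)| / s ds` by
`2 (|u(S)| + ∫_S^∞ s h(s) ds)` uniformly in `T`, and `|λ(s) - 1/s| = |u(s)| / s`.
-/

theorem HasDerivAt.exists_hasDerivWithinAt_Ioi_abs {f : ℝ → ℝ} {f' x : ℝ}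
    (hf : HasDerivAt f f' x) :
    ∃ ε : ℝ, |ε| ≤ 1 ∧ ε * f x = |f x| ∧
      HasDerivWithinAt (fun y => |f y|) (ε * f') (Ioi x) x := by
  have abs_sign_le (a : ℝ) : |(SignType.sign a : ℝ)| ≤ 1 := by
    cases SignType.sign a <;> simp
  by_cases hfx : f x = 0
  · refine ⟨SignType.sign f', abs_sign_le f', by simp [hfx], ?_⟩
    rw [sign_mul_self, hasDerivWithinAt_iff_tendsto_slope,
      sdiff_singleton_eq_self (s := Ioi x) (lt_irrefl x)]
    refine ((hasDerivAt_iff_tendsto_slope.mp hf).abs.mono_left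
      (nhdsWithin_mono _ fun y hy => ne_of_gt hy)).congr' ?_
    filter_upwards [self_mem_nhdsWithin] with y hy
    rw [slope_def_field, slope_def_field, hfx, abs_zero, sub_zero, sub_zero, abs_div,
      abs_of_pos (sub_pos.2 hy)]
  · exact ⟨SignType.sign (f x), abs_sign_le _, sign_mul_self _,
      ((hasDerivAt_abs hfx).comp x hf).hasDerivWithinAt⟩

theorem abs_sub_abs_le_integral_of_hasDerivAt {u u' φ : ℝ → ℝ} {a b : ℝ} (hab : a ≤ b)
    (hu : ∀ x ∈ Icc a b, HasDerivAt u (u' x) x) (hφ : IntegrableOn φ (Icc a b))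
    (hbound : ∀ x ∈ Ioo a b, ∀ ε : ℝ, |ε| ≤ 1 → ε * u x = |u x| → ε * u' x ≤ φ x) :
    |u b| - |u a| ≤ ∫ x in a..b, φ x := by
  choose! ε hε hεu hderiv using fun x (hx : x ∈ Ioo a b) =>
    (hu x (Ioo_subset_Icc_self hx)).exists_hasDerivWithinAt_Ioi_abs
  have hcont : ContinuousOn (fun x => |u x|) (Icc a b) :=
    fun x hx => (hu x hx).continuousAt.continuousWithinAt.abs
  exact intervalIntegral.sub_le_integral_of_hasDeriv_right_of_le hab hcont hderiv hφ
    fun x hx => hbound x hx _ (hε x hx) (hεu x hx)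

theorem mul_deriv_sub_one_le_of_abs_le_half {x l l' ε : ℝ} (hx : 0 < x)
    (hu : |x * l - 1| ≤ 1 / 2) (hε : |ε| ≤ 1) (hεu : ε * (x * l - 1) = |x * l - 1|) :
    ε * (l + x * l') ≤ x * |l' + l ^ 2| - |x * l - 1| / (2 * x) := by
  set u := x * l - 1 with hu_def
  have hsplit : ε * (l + x * l') = -(|u| * (1 + u)) / x + x * (ε * (l' + l ^ 2)) := by
    rw [← hεu, hu_def]
    field_simp
    ring
  have hdecay : -(|u| * (1 + u)) / x ≤ -(|u| / (2 * x)) := by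
    rw [neg_div, neg_le_neg_iff, div_le_div_iff₀ (by positivity) hx]
    have h1u : 0 ≤ 1 + 2 * u := by linarith [(abs_le.1 hu).1]
    nlinarith [mul_nonneg (mul_nonneg (abs_nonneg u) hx.le) h1u]
  have hforce : ε * (l' + l ^ 2) ≤ |l' + l ^ 2| := by
    calc ε * (l' + l ^ 2) ≤ |ε * (l' + l ^ 2)| := le_abs_self _
      _ = |ε| * |l' + l ^ 2| := abs_mul _ _
      _ ≤ |l' + l ^ 2| := mul_le_of_le_one_left (abs_nonneg _) hε
  rw [hsplit]
  nlinarith [mul_le_mul_of_nonneg_left hforce hx.le]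

theorem intervalIntegral_abs_sub_one_div_le_of_riccati {lam lam' h : ℝ → ℝ} {S T : ℝ}
    (hS : 0 < S) (hST : S ≤ T) (hderiv : ∀ s ∈ Icc S T, HasDerivAt lam (lam' s) s)
    (hricc : ∀ s ∈ Icc S T, |lam' s + lam s ^ 2| ≤ h s)
    (hsmall : ∀ s ∈ Icc S T, |s * lam s - 1| ≤ 1 / 2)
    (hh : IntegrableOn (fun s => s * h s) (Icc S T)) :
    ∫ s in S..T, |lam s - 1 / s| ≤ 2 * (|S * lam S - 1| + ∫ s in S..T, s * h s) := by
  set u : ℝ → ℝ := fun s => s * lam s - 1 with hu_def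
  have hpos : ∀ s ∈ Icc S T, 0 < s := fun s hs => hS.trans_le hs.1
  have hu : ∀ s ∈ Icc S T, HasDerivAt u (lam s + s * lam' s) s := fun s hs => by
    simpa only [one_mul] using ((hasDerivAt_id' s).fun_mul (hderiv s hs)).sub_const 1
  have hw : IntegrableOn (fun s => |u s| / (2 * s)) (Icc S T) :=
    ContinuousOn.integrableOn_Icc fun s hs =>
      ((hu s hs).continuousAt.continuousWithinAt.abs).div
        (continuousWithinAt_id.const_mul 2) (by linarith [hpos s hs])
  have hdecay : |u T| - |u S| ≤ ∫ s in S..T, (s * h s - |u s| / (2 * s)) := by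
    refine abs_sub_abs_le_integral_of_hasDerivAt hST hu (hh.sub hw) fun s hs ε hε hεu => ?_
    have hs := Ioo_subset_Icc_self hs
    calc ε * (lam s + s * lam' s)
        ≤ s * |lam' s + lam s ^ 2| - |u s| / (2 * s) :=
          mul_deriv_sub_one_le_of_abs_le_half (hpos s hs) (hsmall s hs) hε hεu
      _ ≤ s * h s - |u s| / (2 * s) := by gcongr; exacts [(hpos s hs).le, hricc s hs]
  have hrw : ∫ s in S..T, |lam s - 1 / s| = 2 * ∫ s in S..T, |u s| / (2 * s) := by
    rw [← intervalIntegral.integral_const_mul]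
    refine intervalIntegral.integral_congr fun s hs => ?_
    rw [uIcc_of_le hST] at hs
    have hs0 := hpos s hs
    simp only [hu_def]
    rw [show lam s - 1 / s = (s * lam s - 1) / s by field_simp, abs_div, abs_of_pos hs0]
    field_simp
  rw [intervalIntegral.integral_sub ((intervalIntegrable_iff_integrableOn_Icc_of_le hST).2 hh)
    ((intervalIntegrable_iff_integrableOn_Icc_of_le hST).2 hw)] at hdecay
  rw [hrw]
  linarith [abs_nonneg (u T)]

theorem continuousOn_abs_sub_one_div {lam : ℝ → ℝ} {a : ℝ} (ha : 0 < a)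
    (hlam : ContinuousOn lam (Ici a)) : ContinuousOn (fun s => |lam s - 1 / s|) (Ici a) :=
  (hlam.sub (continuousOn_const.div continuousOn_id fun _ hs => (ha.trans_le hs).ne')).abs

theorem integrableOn_Ioi_abs_sub_one_div_of_riccati {lam lam' h : ℝ → ℝ} {S : ℝ} (hS : 0 < S)
    (hderiv : ∀ s ∈ Ici S, HasDerivAt lam (lam' s) s)
    (hricc : ∀ s ∈ Ici S, |lam' s + lam s ^ 2| ≤ h s)
    (hsmall : ∀ s ∈ Ici S, |s * lam s - 1| ≤ 1 / 2)
    (hh : IntegrableOn (fun s => s * h s) (Ici S)) :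
    IntegrableOn (fun s => |lam s - 1 / s|) (Ioi S) := by
  have hcont := continuousOn_abs_sub_one_div hS fun s hs =>
    (hderiv s hs).continuousAt.continuousWithinAt
  have hh0 : ∀ s ∈ Ici S, 0 ≤ s * h s := fun s hs =>
    mul_nonneg (hS.trans_le hs).le ((abs_nonneg _).trans (hricc s hs))
  refine integrableOn_Ioi_of_intervalIntegral_norm_bounded
    (2 * (|S * lam S - 1| + ∫ s in Ici S, s * h s)) S (l := atTop) (b := id)
    (fun T => ((hcont.mono Icc_subset_Ici_self).integrableOn_Icc).mono_set Ioc_subset_Icc_self)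
    tendsto_id ?_
  filter_upwards [eventually_ge_atTop S] with T hST
  have hsub : Icc S T ⊆ Ici S := Icc_subset_Ici_self
  have htail : ∫ s in S..T, s * h s ≤ ∫ s in Ici S, s * h s := by
    rw [intervalIntegral.integral_of_le hST]
    exact setIntegral_mono_set hh ((ae_restrict_iff' measurableSet_Ici).2 (ae_of_all _ hh0))
      (Ioc_subset_Icc_self.trans hsub).eventuallyLE
  simp only [Real.norm_eq_abs, abs_abs, id]
  calc ∫ s in S..T, |lam s - 1 / s|
      ≤ 2 * (|S * lam S - 1| + ∫ s in S..T, s * h s) :=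
        intervalIntegral_abs_sub_one_div_le_of_riccati hS hST (fun s hs => hderiv s (hsub hs))
          (fun s hs => hricc s (hsub hs)) (fun s hs => hsmall s (hsub hs)) (hh.mono_set hsub)
    _ ≤ 2 * (|S * lam S - 1| + ∫ s in Ici S, s * h s) := by gcongr

theorem riccati_integral_bound_one_general (s₀ : ℝ) (hs₀ : 0 < s₀)
    (h lam lam' : ℝ → ℝ)
    (hhint : IntegrableOn (fun s => s * h s) (Ici s₀))
    (hderiv : ∀ s ∈ Ici s₀, HasDerivAt lam (lam' s) s)
    (hricc : ∀ s ∈ Ici s₀, |lam' s + lam s ^ 2| ≤ h s)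
    (hlim : Tendsto (fun s => s * lam s) atTop (nhds 1)) :
    IntegrableOn (fun s => |lam s - 1 / s|) (Ici s₀) := by
  obtain ⟨S, hS⟩ : ∃ S, ∀ s ≥ S, s₀ ≤ s ∧ |s * lam s - 1| ≤ 1 / 2 :=
    eventually_atTop.mp <| (eventually_ge_atTop s₀).and <|
      (hlim.eventually (Metric.closedBall_mem_nhds 1 one_half_pos)).mono fun s hs => by
        rwa [Real.dist_eq] at hs
  have hsub : Ici S ⊆ Ici s₀ := fun s hs => (hS s hs).1
  have htail := integrableOn_Ioi_abs_sub_one_div_of_riccati (hs₀.trans_le (hS S le_rfl).1)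
    (fun s hs => hderiv s (hsub hs)) (fun s hs => hricc s (hsub hs)) (fun s hs => (hS s hs).2)
    (hhint.mono_set hsub)
  have hcont := continuousOn_abs_sub_one_div hs₀ fun s hs =>
    (hderiv s hs).continuousAt.continuousWithinAt
  exact ((hcont.mono Icc_subset_Ici_self).integrableOn_Icc.union htail).mono_set
    Ici_subset_Icc_union_Ioi

/-- Let `λ` be a `C¹` solution on `[s₀, ∞)` of the Riccati inequality
`|λ' + λ²| ≤ h(s)` with `∫ s·h(s) ds < ∞` and `s·λ(s) → 1` as `s → ∞`.
Then `∫_{s₀}^∞ |λ(s) − 1/s| ds < ∞`. -/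
theorem riccati_integral_bound_one (s₀ : ℝ) (hs₀ : 0 < s₀)
    (h lam lam' : ℝ → ℝ)
    (hhcont : ContinuousOn h (Ici s₀)) (hh0 : ∀ s ∈ Ici s₀, 0 ≤ h s)
    (hhint : IntegrableOn (fun s => s * h s) (Ici s₀))
    (hderiv : ∀ s ∈ Ici s₀, HasDerivAt lam (lam' s) s)
    (hcont : ContinuousOn lam' (Ici s₀))
    (hricc : ∀ s ∈ Ici s₀, |lam' s + lam s ^ 2| ≤ h s)
    (hlim : Tendsto (fun s => s * lam s) atTop (nhds 1)) :
    IntegrableOn (fun s => |lam s - 1 / s|) (Ici s₀) :=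
  riccati_integral_bound_one_general s₀ hs₀ h lam lam' hhint hderiv hricc hlim
end

section
/- Let λ(s) be a C¹ solution on [s₀, ∞) of |λ' + λ²| ≤ h(s) with ∫ s·h(s)ds < ∞ and s·λ(s) → 0 as s → ∞. Then ∫_{s₀}^∞ |λ(s)| ds < ∞, and consequently any solution of (log J)' = λ satisfies C^{−1} ≤ J(s) ≤ C for a constant C independent of s. -/
open MeasureTheory Set Filter

/-!
Once `|s λ(s)| ≤ 1/2`, the Riccati inequality gives `((s λ)²)' = 2 s λ (λ + s λ') ≥ s λ² - s h`,
so `∫ s λ² < ∞` because `s λ` stays bounded. Then `ψ := λ² + h` satisfies `∫ s ψ < ∞` and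
`|λ'| ≤ ψ`, and as `λ → 0` we get `|λ(s)| ≤ ∫_s^∞ ψ`, a tail function that is integrable
because `∫ s ψ(s) ds < ∞`. Finally `log J(s) = ∫_{s₀}^s λ`.
-/

theorem integrableOn_Ici_of_intervalIntegral_le {f : ℝ → ℝ} {a C : ℝ}
    (hloc : ∀ T ∈ Ici a, IntegrableOn f (Icc a T)) (hf : ∀ s ∈ Ici a, 0 ≤ f s)
    (hC : ∀ T ∈ Ici a, ∫ x in a..T, f x ≤ C) : IntegrableOn f (Ici a) := by
  rw [integrableOn_Ici_iff_integrableOn_Ioi]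
  refine integrableOn_Ioi_of_intervalIntegral_norm_bounded C a (fun T => ?_) tendsto_id ?_
  · rcases le_total a T with hT | hT
    · exact (hloc T hT).mono_set Ioc_subset_Icc_self
    · simp [Ioc_eq_empty_of_le hT]
  · filter_upwards [eventually_ge_atTop a] with T hT
    refine le_of_eq_of_le (intervalIntegral.integral_congr fun x hx => ?_) (hC T hT)
    exact Real.norm_of_nonneg (hf x (uIcc_of_le hT ▸ hx).1)

theorem MeasureTheory.IntegrableOn.of_id_mul_Ici {f : ℝ → ℝ} {a : ℝ} (ha : 0 < a)
    (hf : AEStronglyMeasurable f (volume.restrict (Ici a)))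
    (hmul : IntegrableOn (fun s => s * f s) (Ici a)) : IntegrableOn f (Ici a) := by
  refine Integrable.mono' (hmul.norm.const_mul a⁻¹) hf ?_
  filter_upwards [ae_restrict_mem measurableSet_Ici] with s hs
  calc ‖f s‖ ≤ a⁻¹ * s * ‖f s‖ := le_mul_of_one_le_left (norm_nonneg _) ((one_le_inv_mul₀ ha).2 hs)
    _ = a⁻¹ * ‖s * f s‖ := by rw [norm_mul, Real.norm_of_nonneg (ha.le.trans hs), mul_assoc]

theorem hasDerivAt_integral_Ioi {E : Type*} [NormedAddCommGroup E] [NormedSpace ℝ E]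
    [CompleteSpace E] {f : ℝ → E} {a s : ℝ} (hf : IntegrableOn f (Ioi a)) (hs : a < s)
    (hfs : ContinuousAt f s) : HasDerivAt (fun u => ∫ t in Ioi u, f t) (-f s) s := by
  have hprim : HasDerivAt (fun u => ∫ t in a..u, f t) (f s) s :=
    intervalIntegral.integral_hasDerivAt_right
      ((intervalIntegrable_iff_integrableOn_Ioc_of_le hs.le).2 (hf.mono_set Ioc_subset_Ioi_self))
      (AEStronglyMeasurable.stronglyMeasurableAtFilter_of_mem hf.1 (Ioi_mem_nhds hs)) hfs
  refine (hprim.const_sub (∫ t in Ioi a, f t)).congr_of_eventuallyEq ?_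
  filter_upwards [Ioi_mem_nhds hs] with u hu
  exact (intervalIntegral.integral_Ioi_sub_Ioi hf hu.le).symm ▸ (sub_sub_cancel _ _).symm

theorem mul_integral_Ioi_le_integral_Ioi_mul {ψ : ℝ → ℝ} {T : ℝ} (hψ : IntegrableOn ψ (Ioi T))
    (hmul : IntegrableOn (fun t => t * ψ t) (Ioi T)) (hψ0 : ∀ t ∈ Ioi T, 0 ≤ ψ t) :
    T * ∫ t in Ioi T, ψ t ≤ ∫ t in Ioi T, t * ψ t := by
  rw [← integral_const_mul]
  exact setIntegral_mono_on (hψ.const_mul T) hmul measurableSet_Ioi fun t ht =>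
    mul_le_mul_of_nonneg_right ht.out.le (hψ0 t ht)

theorem integrableOn_Ici_integral_Ioi {ψ : ℝ → ℝ} {a : ℝ} (ha : 0 < a)
    (hψ : ContinuousOn ψ (Ici a)) (hψ0 : ∀ t ∈ Ici a, 0 ≤ ψ t)
    (hmul : IntegrableOn (fun t => t * ψ t) (Ici a)) :
    IntegrableOn (fun s => ∫ t in Ioi s, ψ t) (Ici a) := by
  have hψi : IntegrableOn ψ (Ici a) :=
    hmul.of_id_mul_Ici ha (hψ.aestronglyMeasurable measurableSet_Ici)
  have hIoi : ∀ s ∈ Ici a, Ioi s ⊆ Ici a := fun s hs =>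
    Ioi_subset_Ici_self.trans (Ici_subset_Ici.2 hs)
  set Φ : ℝ → ℝ := fun s => ∫ t in Ioi s, ψ t
  set C := ∫ t in Ici a, t * ψ t
  have hmul_le : ∀ {s : Set ℝ}, s ⊆ Ici a → ∫ t in s, t * ψ t ≤ C := fun hs =>
    setIntegral_mono_set hmul (ae_restrict_of_forall_mem measurableSet_Ici
      fun t ht => mul_nonneg (ha.le.trans ht) (hψ0 t ht)) hs.eventuallyLE
  have hΦ0 : ∀ s ∈ Ici a, 0 ≤ Φ s := fun s hs =>
    setIntegral_nonneg measurableSet_Ioi fun t ht => hψ0 t (hIoi s hs ht)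
  have hΦc : ContinuousOn Φ (Ici a) :=
    (hψi.mono_set Ioi_subset_Ici_self).continuousOn_Ici_primitive_Ioi
  -- integrating `(s Φ s)' = Φ s - s ψ s` bounds `∫ Φ` by `T Φ T + ∫ s ψ s ≤ 2 C`
  refine integrableOn_Ici_of_intervalIntegral_le (C := 2 * C)
    (fun T _ => (hΦc.mono Icc_subset_Ici_self).integrableOn_Icc) hΦ0 fun T hT => ?_
  have hsub : Icc a T ⊆ Ici a := Icc_subset_Ici_self
  have hΦi : IntervalIntegrable Φ volume a T := (hΦc.mono hsub).intervalIntegrable_of_Icc hT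
  have hmuli : IntervalIntegrable (fun s => s * ψ s) volume a T :=
    ((continuousOn_id.mul hψ).mono hsub).intervalIntegrable_of_Icc hT
  have hparts : ∫ s in a..T, (Φ s - s * ψ s) = T * Φ T - a * Φ a := by
    refine intervalIntegral.integral_eq_sub_of_hasDerivAt_of_le (f := fun s => s * Φ s) hT
      ((continuousOn_id.mul hΦc).mono hsub) (fun s hs => ?_) (hΦi.sub hmuli)
    have hΦd := hasDerivAt_integral_Ioi (hψi.mono_set Ioi_subset_Ici_self) hs.1
      (hψ.continuousAt (Ici_mem_nhds hs.1))
    exact ((hasDerivAt_id' s).mul hΦd).congr_deriv (by simp only [Φ]; ring)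
  have hTΦ : T * Φ T ≤ C :=
    (mul_integral_Ioi_le_integral_Ioi_mul (hψi.mono_set (hIoi T hT))
      (hmul.mono_set (hIoi T hT)) fun t ht => hψ0 t (hIoi T hT ht)).trans (hmul_le (hIoi T hT))
  have hmuli_le : ∫ s in a..T, s * ψ s ≤ C := by
    rw [intervalIntegral.integral_of_le hT]
    exact hmul_le (Ioc_subset_Icc_self.trans hsub)
  rw [intervalIntegral.integral_sub hΦi hmuli] at hparts
  linarith [mul_nonneg ha.le (hΦ0 a self_mem_Ici)]

theorem mul_sq_le_of_riccati {s x x' h : ℝ} (hs : 0 < s) (hx : |s * x| ≤ 1 / 2)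
    (hric : |x' + x ^ 2| ≤ h) : s * x ^ 2 ≤ 2 * (s * x) * (x + s * x') + s * h := by
  obtain ⟨hx₁, hx₂⟩ := abs_le.1 hx
  obtain ⟨hg₁, hg₂⟩ := abs_le.1 hric
  have P₁ : 0 ≤ s * (x ^ 2 * (1 - 2 * (s * x))) :=
    mul_nonneg hs.le (mul_nonneg (sq_nonneg _) (by linarith))
  have P₂ : 0 ≤ s * ((1 + 2 * (s * x)) * (h + (x' + x ^ 2))) :=
    mul_nonneg hs.le (mul_nonneg (by linarith) (by linarith))
  have P₃ : 0 ≤ s * ((1 - 2 * (s * x)) * (h - (x' + x ^ 2))) :=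
    mul_nonneg hs.le (mul_nonneg (by linarith) (by linarith))
  -- the difference of the two sides is `P₁ + (P₂ + P₃) / 2`
  linarith

section Riccati

variable {a : ℝ} {lam lam' h : ℝ → ℝ}

theorem integrableOn_mul_sq_of_riccati (ha : 0 < a)
    (hderiv : ∀ s ∈ Ici a, HasDerivAt lam (lam' s) s) (hcont : ContinuousOn lam' (Ici a))
    (hricc : ∀ s ∈ Ici a, |lam' s + lam s ^ 2| ≤ h s)
    (hsmall : ∀ s ∈ Ici a, |s * lam s| ≤ 1 / 2)
    (hh : IntegrableOn (fun s => s * h s) (Ici a)) :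
    IntegrableOn (fun s => s * lam s ^ 2) (Ici a) := by
  have hlam : ContinuousOn lam (Ici a) := fun s hs =>
    (hderiv s hs).continuousAt.continuousWithinAt
  have hsq : ContinuousOn (fun s => s * lam s ^ 2) (Ici a) := continuousOn_id.mul (hlam.pow 2)
  refine integrableOn_Ici_of_intervalIntegral_le (C := 1 / 4 + ∫ s in Ici a, s * h s)
    (fun T _ => (hsq.mono Icc_subset_Ici_self).integrableOn_Icc)
    (fun s hs => mul_nonneg (ha.le.trans hs) (sq_nonneg _)) fun T hT => ?_
  have hsub : uIcc a T ⊆ Ici a := by rw [uIcc_of_le hT]; exact Icc_subset_Ici_self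
  set D := fun s => 2 * (s * lam s) * (lam s + s * lam' s)
  have hD : ∀ s ∈ Ici a, HasDerivAt (fun s => (s * lam s) ^ 2) (D s) s := fun s hs =>
    (((hasDerivAt_id' s).mul (hderiv s hs)).pow 2).congr_deriv
      (by simp only [D, Pi.mul_apply]; ring)
  have hDi : IntervalIntegrable D volume a T :=
    (((continuousOn_const.mul (continuousOn_id.mul hlam)).mul
      (hlam.add (continuousOn_id.mul hcont))).mono hsub).intervalIntegrable
  have hhi : IntervalIntegrable (fun s => s * h s) volume a T :=
    (intervalIntegrable_iff_integrableOn_Ioc_of_le hT).2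
      (hh.mono_set (Ioc_subset_Icc_self.trans Icc_subset_Ici_self))
  have hFTC := intervalIntegral.integral_eq_sub_of_hasDerivAt (fun s hs => hD s (hsub hs)) hDi
  have hh_le : ∫ s in a..T, s * h s ≤ ∫ s in Ici a, s * h s := by
    rw [intervalIntegral.integral_of_le hT]
    exact setIntegral_mono_set hh (ae_restrict_of_forall_mem measurableSet_Ici fun s hs =>
        mul_nonneg (ha.le.trans hs) ((abs_nonneg _).trans (hricc s hs)))
      (Ioc_subset_Icc_self.trans Icc_subset_Ici_self).eventuallyLE
  have hT_sq : (T * lam T) ^ 2 ≤ 1 / 4 := by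
    nlinarith [abs_le.1 (hsmall T hT)]
  calc ∫ s in a..T, s * lam s ^ 2 ≤ ∫ s in a..T, (D s + s * h s) :=
        intervalIntegral.integral_mono_on hT (hsq.mono hsub).intervalIntegrable (hDi.add hhi)
          fun s hs => mul_sq_le_of_riccati (ha.trans_le hs.1) (hsmall s hs.1) (hricc s hs.1)
    _ = (T * lam T) ^ 2 - (a * lam a) ^ 2 + ∫ s in a..T, s * h s := by
        rw [intervalIntegral.integral_add hDi hhi, hFTC]
    _ ≤ 1 / 4 + ∫ s in Ici a, s * h s := by linarith [sq_nonneg (a * lam a)]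

theorem integrableOn_abs_of_riccati (ha : 0 < a)
    (hderiv : ∀ s ∈ Ici a, HasDerivAt lam (lam' s) s) (hcont : ContinuousOn lam' (Ici a))
    (hricc : ∀ s ∈ Ici a, |lam' s + lam s ^ 2| ≤ h s)
    (hsmall : ∀ s ∈ Ici a, |s * lam s| ≤ 1 / 2)
    (hhcont : ContinuousOn h (Ici a)) (hh : IntegrableOn (fun s => s * h s) (Ici a))
    (hlim : Tendsto lam atTop (nhds 0)) : IntegrableOn (fun s => |lam s|) (Ici a) := by
  have hlam : ContinuousOn lam (Ici a) := fun s hs =>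
    (hderiv s hs).continuousAt.continuousWithinAt
  set ψ := fun t => lam t ^ 2 + h t
  have hψc : ContinuousOn ψ (Ici a) := (hlam.pow 2).add hhcont
  have hψmul : IntegrableOn (fun t => t * ψ t) (Ici a) :=
    ((integrableOn_mul_sq_of_riccati ha hderiv hcont hricc hsmall hh).add hh).congr_fun
      (fun t _ => by simp only [ψ, Pi.add_apply]; ring) measurableSet_Ici
  have hψ : IntegrableOn ψ (Ici a) :=
    hψmul.of_id_mul_Ici ha (hψc.aestronglyMeasurable measurableSet_Ici)
  have hlam'ψ : ∀ t ∈ Ici a, |lam' t| ≤ ψ t := fun t ht =>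
    calc |lam' t| = |(lam' t + lam t ^ 2) - lam t ^ 2| := by rw [add_sub_cancel_right]
      _ ≤ |lam' t + lam t ^ 2| + |lam t ^ 2| := abs_sub _ _
      _ ≤ ψ t := by rw [abs_of_nonneg (sq_nonneg (lam t))]; linarith [hricc t ht]
  have hlam' : IntegrableOn lam' (Ici a) :=
    hψ.mono' (hcont.aestronglyMeasurable measurableSet_Ici)
      (ae_restrict_of_forall_mem measurableSet_Ici hlam'ψ)
  refine (integrableOn_Ici_integral_Ioi ha hψc (fun t ht => (abs_nonneg _).trans (hlam'ψ t ht))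
    hψmul).mono' (hlam.abs.aestronglyMeasurable measurableSet_Ici) ?_
  filter_upwards [ae_restrict_mem measurableSet_Ici] with s hs
  have hIoi : Ioi s ⊆ Ici a := Ioi_subset_Ici_self.trans (Ici_subset_Ici.2 hs)
  have htail : ∫ t in Ioi s, lam' t = 0 - lam s :=
    integral_Ioi_of_hasDerivAt_of_tendsto' (fun t ht => hderiv t (mem_Ici.2 (le_trans hs ht)))
      (hlam'.mono_set hIoi) hlim
  calc ‖|lam s|‖ = ‖∫ t in Ioi s, lam' t‖ := by
        simp only [htail, zero_sub, norm_neg, Real.norm_eq_abs, abs_abs]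
    _ ≤ ∫ t in Ioi s, ψ t := norm_integral_le_of_norm_le (hψ.mono_set hIoi)
        (ae_restrict_of_forall_mem measurableSet_Ioi fun t ht => hlam'ψ t (hIoi ht))

end Riccati

theorem abs_log_le_integral_abs_of_hasDerivAt {a s : ℝ} {lam J : ℝ → ℝ}
    (hlam : ContinuousOn lam (Ici a)) (hint : IntegrableOn (fun t => |lam t|) (Ici a))
    (hJpos : ∀ t ∈ Ici a, 0 < J t) (hJ : ∀ t ∈ Ici a, HasDerivAt J (lam t * J t) t)
    (hJa : J a = 1) (hs : a ≤ s) : |Real.log (J s)| ≤ ∫ t in Ici a, |lam t| := by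
  have hsub : uIcc a s ⊆ Ici a := by rw [uIcc_of_le hs]; exact Icc_subset_Ici_self
  have hlog : ∫ t in a..s, lam t = Real.log (J s) := by
    rw [intervalIntegral.integral_eq_sub_of_hasDerivAt (f := fun t => Real.log (J t))
      (fun t ht => ?_) ((hlam.mono hsub).intervalIntegrable), hJa, Real.log_one, sub_zero]
    have hJt := (hJpos t (hsub ht)).ne'
    simpa only [mul_div_cancel_right₀ _ hJt] using (hJ t (hsub ht)).log hJt
  rw [← hlog, intervalIntegral.integral_of_le hs]
  calc |∫ t in Ioc a s, lam t| ≤ ∫ t in Ioc a s, |lam t| := abs_integral_le_integral_abs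
    _ ≤ ∫ t in Ici a, |lam t| := setIntegral_mono_set hint
        (ae_restrict_of_forall_mem measurableSet_Ici fun t _ => abs_nonneg _)
        (Ioc_subset_Icc_self.trans Icc_subset_Ici_self).eventuallyLE

theorem riccati_integral_bound_zero_general (s₀ : ℝ) (hs₀ : 0 < s₀)
    (h lam lam' J : ℝ → ℝ)
    (hhcont : ContinuousOn h (Ici s₀))
    (hhint : IntegrableOn (fun s => s * h s) (Ici s₀))
    (hderiv : ∀ s ∈ Ici s₀, HasDerivAt lam (lam' s) s)
    (hcont : ContinuousOn lam' (Ici s₀))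
    (hricc : ∀ s ∈ Ici s₀, |lam' s + lam s ^ 2| ≤ h s)
    (hlim : Tendsto (fun s => s * lam s) atTop (nhds 0))
    (hJpos : ∀ s ∈ Ici s₀, 0 < J s)
    (hJ : ∀ s ∈ Ici s₀, HasDerivAt J (lam s * J s) s)
    (hJ0 : J s₀ = 1) :
    IntegrableOn (fun s => |lam s|) (Ici s₀) ∧
      ∀ s ∈ Ici s₀,
        Real.exp (-(∫ t in Ici s₀, |lam t|)) ≤ J s ∧
          J s ≤ Real.exp (∫ t in Ici s₀, |lam t|) := by
  have hlam : ContinuousOn lam (Ici s₀) := fun s hs =>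
    (hderiv s hs).continuousAt.continuousWithinAt
  have hlam0 : Tendsto lam atTop (nhds 0) := (hlim.div_atTop tendsto_id).congr' <|
    (eventually_gt_atTop 0).mono fun s hs => mul_div_cancel_left₀ _ hs.ne'
  obtain ⟨S, hS⟩ := eventually_atTop.1 <| (eventually_ge_atTop s₀).and <|
    hlim.eventually (Metric.closedBall_mem_nhds (0 : ℝ) one_half_pos)
  have hSs₀ : s₀ ≤ S := (hS S le_rfl).1
  have hsub : Ici S ⊆ Ici s₀ := Ici_subset_Ici.2 hSs₀
  have htail : IntegrableOn (fun s => |lam s|) (Ici S) :=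
    integrableOn_abs_of_riccati (hs₀.trans_le hSs₀) (fun s hs => hderiv s (hsub hs))
      (hcont.mono hsub) (fun s hs => hricc s (hsub hs))
      (fun s hs => by simpa using (hS s hs).2) (hhcont.mono hsub) (hhint.mono_set hsub) hlam0
  have habs : IntegrableOn (fun s => |lam s|) (Ici s₀) := by
    rw [← Icc_union_Ici_eq_Ici hSs₀]
    exact ((hlam.mono Icc_subset_Ici_self).abs.integrableOn_Icc).union htail
  refine ⟨habs, fun s hs => ?_⟩
  have hlog := abs_le.1 (abs_log_le_integral_abs_of_hasDerivAt hlam habs hJpos hJ hJ0 hs)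
  exact ⟨(Real.le_log_iff_exp_le (hJpos s hs)).1 hlog.1,
    (Real.log_le_iff_le_exp (hJpos s hs)).1 hlog.2⟩

/-- Let `λ` be a `C¹` solution on `[s₀, ∞)` of `|λ' + λ²| ≤ h(s)` with
`∫ s·h(s) ds < ∞` and `s·λ(s) → 0` as `s → ∞`. Then `∫_{s₀}^∞ |λ| ds < ∞`,
and any positive solution `J` of `(log J)' = λ`, i.e. `J' = λ·J`, with
`J(s₀) = 1`, satisfies `e^{−C₃} ≤ J(s) ≤ e^{C₃}` where `C₃ = ∫_{s₀}^∞ |λ|`. -/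
theorem riccati_integral_bound_zero (s₀ : ℝ) (hs₀ : 0 < s₀)
    (h lam lam' J : ℝ → ℝ)
    (hhcont : ContinuousOn h (Ici s₀)) (hh0 : ∀ s ∈ Ici s₀, 0 ≤ h s)
    (hhint : IntegrableOn (fun s => s * h s) (Ici s₀))
    (hderiv : ∀ s ∈ Ici s₀, HasDerivAt lam (lam' s) s)
    (hcont : ContinuousOn lam' (Ici s₀))
    (hricc : ∀ s ∈ Ici s₀, |lam' s + lam s ^ 2| ≤ h s)
    (hlim : Tendsto (fun s => s * lam s) atTop (nhds 0))
    (hJpos : ∀ s ∈ Ici s₀, 0 < J s)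
    (hJ : ∀ s ∈ Ici s₀, HasDerivAt J (lam s * J s) s)
    (hJ0 : J s₀ = 1) :
    IntegrableOn (fun s => |lam s|) (Ici s₀) ∧
      ∀ s ∈ Ici s₀,
        Real.exp (-(∫ t in Ici s₀, |lam t|)) ≤ J s ∧
          J s ≤ Real.exp (∫ t in Ici s₀, |lam t|) :=
  riccati_integral_bound_zero_general s₀ hs₀ h lam lam' J hhcont hhint hderiv hcont hricc hlim hJpos
    hJ hJ0
end
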